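/- arXiv:1605.06057 — 3 statements merged into one kernel-verified Lean document; each statement's English description precedes it below -/
import Mathlib

section
/- Let K be a compact independent subset of ℝ (meaning that every finite family of distinct elements of K is linearly independent over ℚ, equivalently generates a free abelian group whose rank equals the number of elements). Let L = K ∪ (−K) and let L_n denote the n-fold sumset L + L + ⋯ + L. Then for every n ≥ 1, if x ∈ L_{2n} and x ≠ 0, then (2n+1)·x ∉ L_{2n}. -/
open MeasureTheory Set

def IsIndependentSet (K : Set ℝ) : Prop :=
  ∀ (k : ℕ) (y : Fin k → ℝ), Function.Injective y → (∀ i, y i ∈ K) →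
    ∀ α : Fin k → ℤ, (∑ i, (α i : ℝ) * y i) = 0 → ∀ i, α i = 0

def sumset (L : Set ℝ) (n : ℕ) : Set ℝ :=
  {x | ∃ f : Fin n → ℝ, (∀ i, f i ∈ L) ∧ x = ∑ i, f i}

lemma ind_finset (K : Set ℝ) (hInd : IsIndependentSet K)
    (s : Finset ℝ) (hs : ↑s ⊆ K) (c : ℝ → ℤ)
    (h : ∑ y ∈ s, (c y : ℝ) * y = 0) : ∀ y ∈ s, c y = 0 := by
  classical
  let e : {x // x ∈ s} ≃ Fin s.card := s.equivFin
  let yF : Fin s.card → ℝ := fun i => (e.symm i : ℝ)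
  have hinj : Function.Injective yF := fun i j hij =>
    e.symm.injective (Subtype.ext hij)
  have hmem : ∀ i, yF i ∈ K := fun i => hs (e.symm i).2
  have hsum : ∑ i, ((c (yF i) : ℝ)) * yF i = 0 := by
    have := Equiv.sum_comp e.symm (fun a : {x // x ∈ s} => (c (a : ℝ) : ℝ) * (a : ℝ))
    rw [show (∑ i, ((c (yF i) : ℝ)) * yF i) = ∑ a : {x // x ∈ s}, (c (a : ℝ) : ℝ) * (a : ℝ) from this]
    rw [← h, ← Finset.sum_attach s (fun y => (c y : ℝ) * y)]
    rfl
  have key := hInd s.card yF hinj hmem (fun i => c (yF i)) hsum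
  intro y hy
  have := key (e ⟨y, hy⟩)
  simpa [yF] using this

lemma rep (K : Set ℝ) (L : Set ℝ) (hL : L = K ∪ (-K)) (m : ℕ) (x : ℝ)
    (hx : x ∈ sumset L m) :
    ∃ (s : Finset ℝ) (c : ℝ → ℤ), ↑s ⊆ K ∧ (∀ y, y ∉ s → c y = 0) ∧
      (∑ y ∈ s, |c y|) ≤ m ∧ x = ∑ y ∈ s, (c y : ℝ) * y := by
  classical
  obtain ⟨f, hf, rfl⟩ := hx
  have hrep : ∀ i, ∃ (gi : ℝ) (εi : ℤ), gi ∈ K ∧ |εi| = 1 ∧ f i = (εi : ℝ) * gi := by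
    intro i
    rcases (hL ▸ hf i) with h | h
    · exact ⟨f i, 1, h, rfl, by push_cast; ring⟩
    · exact ⟨-f i, -1, by simpa using h, by norm_num, by push_cast; ring⟩
  choose g ε hgK hε hfe using hrep
  refine ⟨Finset.univ.image g,
    fun y => ∑ i ∈ Finset.univ.filter (fun i => g i = y), ε i, ?_, ?_, ?_, ?_⟩
  · intro y hy
    simp only [Finset.coe_image, Set.mem_image] at hy
    obtain ⟨i, _, rfl⟩ := hy
    exact hgK i
  · intro y hy
    have : Finset.univ.filter (fun i => g i = y) = ∅ := by
      apply Finset.filter_eq_empty_iff.mpr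
      intro i _ hgi
      exact hy (hgi ▸ Finset.mem_image_of_mem g (Finset.mem_univ i))
    simp [this]
  · calc ∑ y ∈ Finset.univ.image g, |∑ i ∈ Finset.univ.filter (fun i => g i = y), ε i|
        ≤ ∑ y ∈ Finset.univ.image g, ∑ i ∈ Finset.univ.filter (fun i => g i = y), |ε i| := by
          apply Finset.sum_le_sum
          intro y _
          exact Finset.abs_sum_le_sum_abs _ _
      _ = ∑ i : Fin m, |ε i| := by
          apply Finset.sum_fiberwise_of_maps_to
          intro i _
          exact Finset.mem_image_of_mem g (Finset.mem_univ i)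
      _ = ∑ i : Fin m, 1 := by simp [hε]
      _ = m := by simp
  · calc (∑ i, f i)
        = ∑ i, (ε i : ℝ) * g i := by simp [hfe]
      _ = ∑ y ∈ Finset.univ.image g, ∑ i ∈ Finset.univ.filter (fun i => g i = y), (ε i : ℝ) * g i := by
          symm
          apply Finset.sum_fiberwise_of_maps_to
          intro i _
          exact Finset.mem_image_of_mem g (Finset.mem_univ i)
      _ = ∑ y ∈ Finset.univ.image g, ((∑ i ∈ Finset.univ.filter (fun i => g i = y), ε i : ℤ) : ℝ) * y := by
          apply Finset.sum_congr rfl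
          intro y _
          push_cast
          rw [Finset.sum_mul]
          apply Finset.sum_congr rfl
          intro i hi
          rw [(Finset.mem_filter.mp hi).2]

theorem stmt0 (K : Set ℝ) (hK : IsCompact K) (hInd : IsIndependentSet K)
    (L : Set ℝ) (hL : L = K ∪ (-K)) (n : ℕ) (hn : 1 ≤ n)
    (x : ℝ) (hx : x ∈ sumset L (2 * n)) (hx0 : x ≠ 0) :
    ((2 * n + 1 : ℕ) : ℝ) * x ∉ sumset L (2 * n) := by
  classical
  intro hmx
  obtain ⟨s, c, hsK, hc0, habs, hxs⟩ := rep K L hL (2 * n) x hx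
  obtain ⟨s', c', hs'K, hc'0, habs', hxs'⟩ := rep K L hL (2 * n) _ hmx
  set u := s ∪ s' with hu
  have h1 : ∑ y ∈ u, (c y : ℝ) * y = x := by
    rw [hxs]
    symm
    apply Finset.sum_subset (Finset.subset_union_left)
    intro y _ hy
    rw [hc0 y hy]; simp
  have h2 : ∑ y ∈ u, (c' y : ℝ) * y = ((2 * n + 1 : ℕ) : ℝ) * x := by
    rw [hxs']
    symm
    apply Finset.sum_subset (Finset.subset_union_right)
    intro y _ hy
    rw [hc'0 y hy]; simp
  have hdsum : ∑ y ∈ u, (((2 * n + 1 : ℤ) * c y - c' y : ℤ) : ℝ) * y = 0 := by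
    have : ∑ y ∈ u, (((2 * n + 1 : ℤ) * c y - c' y : ℤ) : ℝ) * y
        = ((2 * n + 1 : ℕ) : ℝ) * (∑ y ∈ u, (c y : ℝ) * y) - ∑ y ∈ u, (c' y : ℝ) * y := by
      rw [Finset.mul_sum, ← Finset.sum_sub_distrib]
      apply Finset.sum_congr rfl
      intro y _
      push_cast
      ring
    rw [this, h1, h2]
    ring
  have huK : ↑u ⊆ K := by
    rw [hu]
    push_cast [Finset.coe_union]
    exact Set.union_subset hsK hs'K
  have hd := ind_finset K hInd u huK _ hdsum
  have hczero : ∀ y ∈ s, c y = 0 := by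
    intro y hy
    have hyu : y ∈ u := Finset.mem_union_left _ hy
    have heq : (2 * n + 1 : ℤ) * c y = c' y := by
      have := hd y hyu
      omega
    have hb : |c' y| ≤ (2 * n : ℤ) := by
      by_cases hy' : y ∈ s'
      · calc |c' y| ≤ ∑ z ∈ s', |c' z| :=
              Finset.single_le_sum (fun z _ => abs_nonneg (c' z)) hy'
          _ ≤ ((2 * n : ℕ) : ℤ) := habs'
          _ = (2 * n : ℤ) := by push_cast; ring
      · rw [hc'0 y hy']; simp
    by_contra hcy
    have h1a : (1 : ℤ) ≤ |c y| := Int.one_le_abs (by omega)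
    have : (2 * n + 1 : ℤ) ≤ |(2 * n + 1 : ℤ) * c y| := by
      rw [abs_mul, abs_of_nonneg (by positivity : (0:ℤ) ≤ 2 * n + 1)]
      nlinarith
    rw [heq] at this
    omega
  apply hx0
  rw [hxs]
  apply Finset.sum_eq_zero
  intro y hy
  rw [hczero y hy]
  simp
end

section
/- Let μ be a finite symmetric Borel measure on ℝ with decomposition μ = μ_c + μ_a into continuous and atomic parts. Assume μ_c ∗ μ_c ≺ μ_c and let Λ be the subgroup of ℝ generated by the atoms of μ_a, with δ_Λ a finite atomic measure whose atom set is Λ. Assume μ_a ≠ 0. Then the joint measure class of (μ^{∗k})_{k ≥ 1} equals the measure class of (μ_c ∗ δ_Λ) + δ_Λ; that is, for every Borel set U ⊂ ℝ: μ^{∗k}(U) = 0 for all k ≥ 1 if and only if (μ_c ∗ δ_Λ)(U) = 0 and δ_Λ(U) = 0. -/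
open MeasureTheory Set

noncomputable def convPow (μ : MeasureTheory.Measure ℝ) : ℕ → MeasureTheory.Measure ℝ
  | 0 => MeasureTheory.Measure.dirac 0
  | n + 1 => (convPow μ n).conv μ

/-!
Write `τ = μc ∗ δ + δ`. Since `0` is an atom of `δ`, `μc ≪ μc ∗ δ`; together with `μa ≪ δ` this
gives `μ ≪ τ`, and `μc ∗ μc ≪ μc`, `δ ∗ δ ≪ δ` (`Λ` is closed under addition) give `τ ∗ μ ≪ τ`,
so every `μ^{∗k}` is absolutely continuous with respect to `τ`.

Conversely, the atoms of `μa` form a symmetric set, so the monoid they generate is already `Λ`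
and every `y ∈ Λ` is an atom of some `μa^{∗k}`. A set `U` that is null for all `μ^{∗k}` therefore
misses `Λ`, and `μa^{∗k}{y} · μc(U - y) ≤ μ^{∗(k+1)}(U) = 0` forces `μc(U - y) = 0` for `y ∈ Λ`,
which is `(μc ∗ δ)(U) = 0`.
-/

namespace MeasureTheory.Measure

section Atoms

variable {α : Type*} [MeasurableSpace α]

lemma absolutelyContinuous_of_measure_compl_eq_zero {ν δ : Measure α} {S : Set α}
    (hpos : ∀ x ∈ S, 0 < δ {x}) (hν : ν Sᶜ = 0) : ν ≪ δ := by
  refine fun t ht => measure_mono_null (show t ⊆ Sᶜ from fun x hxt hxS => ?_) hν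
  exact (hpos x hxS).ne' (measure_mono_null (singleton_subset_iff.2 hxt) ht)

lemma exists_measure_singleton_pos {μ : Measure α} (hμ : μ ≠ 0)
    (hatomic : μ {x | 0 < μ {x}}ᶜ = 0) : ∃ x, 0 < μ {x} := by
  by_contra! h
  have hA : {x | 0 < μ {x}} = ∅ := eq_empty_of_forall_notMem fun x => (h x).not_gt
  exact hμ (measure_univ_eq_zero.1 (by rwa [hA, compl_empty] at hatomic))

variable [MeasurableSingletonClass α]

lemma countable_setOf_measure_singleton_pos (μ : Measure α) [SFinite μ] :
    {x | 0 < μ {x}}.Countable := by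
  simpa using countable_meas_pos_of_disjoint_iUnion (μ := μ) measurableSet_singleton
    fun x y hxy => disjoint_singleton.2 hxy

lemma measure_neg_singleton_of_map_neg_eq [InvolutiveNeg α] [MeasurableNeg α] {μ : Measure α}
    (h : μ.map (fun x => -x) = μ) (x : α) : μ {-x} = μ {x} := by
  conv_lhs => rw [← h]
  rw [map_apply measurable_neg (measurableSet_singleton _)]
  simp

end Atoms

section Conv

variable {M : Type*} [AddMonoid M] [MeasurableSpace M] [MeasurableAdd₂ M]

lemma AbsolutelyContinuous.conv {μ₁ μ₂ ν₁ ν₂ : Measure M} [SFinite ν₁] [SFinite ν₂]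
    (hμ : μ₁ ≪ μ₂) (hν : ν₁ ≪ ν₂) : μ₁ ∗ ν₁ ≪ μ₂ ∗ ν₂ :=
  (hμ.prod hν).map measurable_add

lemma conv_apply (μ ν : Measure M) [SFinite ν] {s : Set M} (hs : MeasurableSet s) :
    (μ ∗ ν) s = ∫⁻ x, ν ((x + ·) ⁻¹' s) ∂μ := by
  rw [conv, map_apply measurable_add hs, prod_apply (measurable_add hs)]
  rfl

lemma conv_apply_eq_zero {μ ν : Measure M} [SFinite ν] {s : Set M} (hs : MeasurableSet s)
    (h : ∀ᵐ x ∂μ, ν ((x + ·) ⁻¹' s) = 0) : (μ ∗ ν) s = 0 := by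
  rw [conv_apply μ ν hs, lintegral_congr_ae h, lintegral_zero]

lemma conv_compl_addSubmonoid_eq_zero {μ ν : Measure M} [SFinite ν] {S : AddSubmonoid M}
    (hS : MeasurableSet (S : Set M)) (hμ : μ (S : Set M)ᶜ = 0) (hν : ν (S : Set M)ᶜ = 0) :
    (μ ∗ ν) (S : Set M)ᶜ = 0 := by
  refine conv_apply_eq_zero hS.compl ?_
  filter_upwards [ae_iff.2 hμ] with x hx
  exact measure_mono_null (fun y hy hyS => hy (S.add_mem hx hyS)) hν

variable [MeasurableSingletonClass M]

lemma measure_singleton_mul_le_conv_apply (μ ν : Measure M) [SFinite ν] (x : M) {s : Set M}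
    (hs : MeasurableSet s) : μ {x} * ν ((x + ·) ⁻¹' s) ≤ (μ ∗ ν) s := by
  rw [conv_apply μ ν hs, mul_comm]
  exact (lintegral_singleton _ x).symm.trans_le (setLIntegral_le_lintegral _ _)

lemma measure_singleton_mul_le_conv_singleton (μ ν : Measure M) [SFinite ν] (x y : M) :
    μ {x} * ν {y} ≤ (μ ∗ ν) {x + y} :=
  le_trans (by gcongr; simp) (measure_singleton_mul_le_conv_apply μ ν x (measurableSet_singleton _))

lemma conv_self_absolutelyContinuous_of_atoms_addSubmonoid {δ : Measure M} [SFinite δ]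
    {S : AddSubmonoid M} (hpos : ∀ x ∈ S, 0 < δ {x}) (hS : δ (S : Set M)ᶜ = 0) : δ ∗ δ ≪ δ :=
  absolutelyContinuous_of_measure_compl_eq_zero hpos <| conv_compl_addSubmonoid_eq_zero
    ((countable_setOf_measure_singleton_pos δ).mono hpos).measurableSet hS hS

end Conv

section CommConv

variable {M : Type*} [AddCommMonoid M] [MeasurableSpace M] [MeasurableAdd₂ M]
  [MeasurableSingletonClass M]

lemma absolutelyContinuous_conv_of_measure_zero_pos (μ : Measure M) {δ : Measure M} [SFinite μ]
    [SFinite δ] (h : 0 < δ {0}) : μ ≪ μ ∗ δ := by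
  refine AbsolutelyContinuous.mk fun s hs hs0 => ?_
  have := measure_singleton_mul_le_conv_apply δ μ 0 hs
  rw [conv_comm, hs0, nonpos_iff_eq_zero, mul_eq_zero] at this
  simpa [h.ne'] using this

end CommConv

end MeasureTheory.Measure

open Measure

instance (μ : Measure ℝ) [IsFiniteMeasure μ] (n : ℕ) : IsFiniteMeasure (convPow μ n) := by
  induction n with
  | zero => exact inferInstanceAs (IsFiniteMeasure (dirac 0))
  | succ n ih => exact inferInstanceAs (IsFiniteMeasure (convPow μ n ∗ μ))

section ConvPow

variable {μ ν : Measure ℝ} [IsFiniteMeasure μ] [IsFiniteMeasure ν]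

lemma convPow_one : convPow μ 1 = μ :=
  dirac_zero_conv μ

lemma convPow_add (j k : ℕ) : convPow μ (j + k) = convPow μ j ∗ convPow μ k := by
  induction k with
  | zero => exact (conv_dirac_zero _).symm
  | succ k ih => exact (congrArg (· ∗ μ) ih).trans (conv_assoc _ _ _)

lemma MeasureTheory.Measure.AbsolutelyContinuous.convPow (h : ν ≪ μ) (k : ℕ) :
    convPow ν k ≪ convPow μ k := by
  induction k with
  | zero => exact AbsolutelyContinuous.rfl
  | succ k ih => exact ih.conv h

lemma convPow_singleton_add_pos {j k : ℕ} {x y : ℝ} (hx : 0 < convPow μ j {x})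
    (hy : 0 < convPow μ k {y}) : 0 < convPow μ (j + k) {x + y} := by
  rw [convPow_add]
  exact (ENNReal.mul_pos hx.ne' hy.ne').trans_le (measure_singleton_mul_le_conv_singleton _ _ x y)

lemma exists_convPow_singleton_pos_of_mem_closure (hsymm : ∀ x, μ {-x} = μ {x})
    (hne : ∃ x, 0 < μ {x}) {y : ℝ} (hy : y ∈ AddSubgroup.closure {x | 0 < μ {x}}) :
    ∃ k, 1 ≤ k ∧ 0 < convPow μ k {y} := by
  have hneg : -{x : ℝ | 0 < μ {x}} = {x | 0 < μ {x}} := by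
    ext x
    simp [hsymm]
  rw [← AddSubgroup.mem_toAddSubmonoid, AddSubgroup.closure_toAddSubmonoid, hneg, union_self] at hy
  induction hy using AddSubmonoid.closure_induction with
  | mem x hx => exact ⟨1, le_rfl, by rwa [convPow_one]⟩
  | zero =>
    obtain ⟨x, hx⟩ := hne
    have h : 0 < convPow μ (1 + 1) {x + -x} :=
      convPow_singleton_add_pos (by rwa [convPow_one]) (by rwa [convPow_one, hsymm])
    exact ⟨2, one_le_two, by rwa [add_neg_cancel] at h⟩
  | add x z _ _ hx hz =>
    obtain ⟨j, hj, hjx⟩ := hx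
    obtain ⟨k, -, hkz⟩ := hz
    exact ⟨j + k, le_add_right hj, convPow_singleton_add_pos hjx hkz⟩

lemma notMem_of_convPow_singleton_pos (hν : ν ≪ μ) {U : Set ℝ} {k : ℕ} {y : ℝ}
    (hU : convPow μ k U = 0) (hy : 0 < convPow ν k {y}) : y ∉ U :=
  fun hyU => hy.ne' (hν.convPow k (measure_mono_null (singleton_subset_iff.2 hyU) hU))

lemma measure_preimage_add_eq_zero_of_convPow_succ {ρ : Measure ℝ} [IsFiniteMeasure ρ]
    (hν : ν ≪ μ) (hρ : ρ ≪ μ) {U : Set ℝ} (hU : MeasurableSet U) {k : ℕ} {y : ℝ}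
    (h : convPow μ (k + 1) U = 0) (hy : 0 < convPow ν k {y}) : ρ ((y + ·) ⁻¹' U) = 0 := by
  have hle := measure_singleton_mul_le_conv_apply (convPow ν k) ρ y hU
  rw [(hν.convPow k).conv hρ h, nonpos_iff_eq_zero, mul_eq_zero] at hle
  exact hle.resolve_left hy.ne'

lemma conv_apply_eq_zero_and_apply_eq_zero_of_convPow {ρ δ : Measure ℝ} [IsFiniteMeasure ρ]
    [SFinite δ] (hν : ν ≪ μ) (hρ : ρ ≪ μ) {S : Set ℝ}
    (hS : ∀ y ∈ S, ∃ k, 1 ≤ k ∧ 0 < convPow ν k {y}) (hδ : δ Sᶜ = 0) {U : Set ℝ}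
    (hU : MeasurableSet U) (H : ∀ k, 1 ≤ k → convPow μ k U = 0) : (ρ ∗ δ) U = 0 ∧ δ U = 0 := by
  have hUS : U ⊆ Sᶜ := fun y hyU hyS =>
    let ⟨k, hk, hky⟩ := hS y hyS
    notMem_of_convPow_singleton_pos hν (H k hk) hky hyU
  refine ⟨?_, measure_mono_null hUS hδ⟩
  rw [conv_comm]
  refine conv_apply_eq_zero hU ?_
  filter_upwards [ae_iff.2 hδ] with y hy
  obtain ⟨k, -, hky⟩ := hS y hy
  exact measure_preimage_add_eq_zero_of_convPow_succ hν hρ hU (H (k + 1) le_add_self) hky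

lemma convPow_absolutelyContinuous_conv_add {μc μa δ : Measure ℝ} [IsFiniteMeasure μc]
    [IsFiniteMeasure μa] [IsFiniteMeasure δ] (hμ : μ = μc + μa) (hc : μc ∗ μc ≪ μc)
    (ha : μa ≪ δ) (hδ : δ ∗ δ ≪ δ) (h0 : 0 < δ {0}) {k : ℕ} (hk : 1 ≤ k) :
    convPow μ k ≪ μc ∗ δ + δ := by
  have hδa : δ ∗ μa ≪ δ := (AbsolutelyContinuous.rfl.conv ha).trans hδ
  have hstep : (μc ∗ δ + δ) ∗ μ ≪ μc ∗ δ + δ := by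
    rw [add_conv, hμ, conv_add, conv_add]
    refine .add_left (.add_left ?_ ?_) (.add_left ?_ (hδa.add_right' _))
    · rw [conv_assoc, conv_comm δ, ← conv_assoc]
      exact (hc.conv .rfl).add_right _
    · rw [conv_assoc]
      exact (AbsolutelyContinuous.rfl.conv hδa).add_right _
    · rw [conv_comm]
      exact AbsolutelyContinuous.rfl.add_right _
  induction k, hk using Nat.le_induction with
  | base => rw [convPow_one, hμ]; exact (absolutelyContinuous_conv_of_measure_zero_pos μc h0).add ha
  | succ k _ ih => exact (ih.conv .rfl).trans hstep

end ConvPow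

theorem stmt11 (μ μc μa : Measure ℝ)
    [IsFiniteMeasure μ] [IsFiniteMeasure μc] [IsFiniteMeasure μa]
    (hsum : μ = μc + μa)
    (hsym : μ.map (fun x : ℝ => -x) = μ)
    (hcont : ∀ x : ℝ, μc {x} = 0)
    (hatomic : μa ({x : ℝ | 0 < μa {x}}ᶜ) = 0)
    (hconv : μc.conv μc ≪ μc)
    (Λ : AddSubgroup ℝ) (hΛ : Λ = AddSubgroup.closure {x : ℝ | 0 < μa {x}})
    (δ : Measure ℝ) [IsFiniteMeasure δ]
    (hatoms : ∀ x : ℝ, 0 < δ {x} ↔ x ∈ Λ)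
    (hconc : δ ((Λ : Set ℝ)ᶜ) = 0)
    (hμa : μa ≠ 0) :
    ∀ U : Set ℝ, MeasurableSet U →
      ((∀ k : ℕ, 1 ≤ k → convPow μ k U = 0) ↔ ((μc.conv δ) U = 0 ∧ δ U = 0)) := by
  have hΛδ : ∀ x ∈ Λ, 0 < δ {x} := fun x hx => (hatoms x).2 hx
  have hAΛ : {x : ℝ | 0 < μa {x}} ⊆ Λ := hΛ ▸ AddSubgroup.subset_closure
  have hμaδ : μa ≪ δ := absolutelyContinuous_of_measure_compl_eq_zero hΛδ
    (measure_mono_null (compl_subset_compl.2 hAΛ) hatomic)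
  have hμa_atom (x : ℝ) : μ {x} = μa {x} := by simp [hsum, hcont]
  have hsymm (x : ℝ) : μa {-x} = μa {x} := by
    rw [← hμa_atom, ← hμa_atom, measure_neg_singleton_of_map_neg_eq hsym]
  have hΛ_atoms (y : ℝ) (hy : y ∈ Λ) : ∃ k, 1 ≤ k ∧ 0 < convPow μa k {y} :=
    exists_convPow_singleton_pos_of_mem_closure hsymm (exists_measure_singleton_pos hμa hatomic)
      (hΛ ▸ hy)
  intro U hU
  constructor
  · exact conv_apply_eq_zero_and_apply_eq_zero_of_convPow (hsum ▸ .add_right' .rfl μc)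
      (hsum ▸ .add_right .rfl μa) hΛ_atoms hconc hU
  · rintro ⟨hc, hδ⟩ k hk
    exact convPow_absolutelyContinuous_conv_add hsum hconv hμaδ
      (conv_self_absolutelyContinuous_of_atoms_addSubmonoid (S := Λ.toAddSubmonoid) hΛδ hconc)
      (hΛδ 0 Λ.zero_mem) hk (by simp [hc, hδ])
end

section
/- Let μ be a symmetric finite Borel measure on ℝ and t > 0 an atom of μ. Let δ_{ℤt} be a finite atomic measure on ℝ whose atom set is the subgroup ℤt = {nt : n ∈ ℤ}. Then for every Borel set U, if μ^{∗k}(U) = 0 for all k ≥ 1, then (μ ∗ δ_{ℤt})(U) = 0; that is, μ ∗ δ_{ℤt} is absolutely continuous with respect to μ^{∗k} summed over all k ≥ 1. -/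
open MeasureTheory Set ENNReal

instance convPow.isFiniteMeasure (μ : Measure ℝ) [IsFiniteMeasure μ] (n : ℕ) :
    IsFiniteMeasure (convPow μ n) := by
  induction n with
  | zero => show IsFiniteMeasure (Measure.dirac 0); infer_instance
  | succ n ih => show IsFiniteMeasure ((convPow μ n).conv μ); exact inferInstance

lemma conv_apply_left (ρ μ : Measure ℝ) [SFinite ρ] [SFinite μ] {U : Set ℝ}
    (hU : MeasurableSet U) :
    ρ.conv μ U = ∫⁻ x, μ ((fun y => x + y) ⁻¹' U) ∂ρ := by
  rw [show ρ.conv μ = (ρ.prod μ).map (fun p : ℝ × ℝ => p.1 + p.2) from rfl,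
    Measure.map_apply measurable_add hU, Measure.prod_apply (measurable_add hU)]
  rfl

lemma conv_apply_right (ρ μ : Measure ℝ) [SFinite ρ] [SFinite μ] {U : Set ℝ}
    (hU : MeasurableSet U) :
    ρ.conv μ U = ∫⁻ y, ρ ((fun x => x + y) ⁻¹' U) ∂μ := by
  rw [show ρ.conv μ = (ρ.prod μ).map (fun p : ℝ × ℝ => p.1 + p.2) from rfl,
    Measure.map_apply measurable_add hU, Measure.prod_apply_symm (measurable_add hU)]
  rfl

lemma conv_lb (ρ μ : Measure ℝ) [SFinite ρ] [SFinite μ] {U : Set ℝ}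
    (hU : MeasurableSet U) (a : ℝ) :
    ρ {a} * μ ((fun x => a + x) ⁻¹' U) ≤ ρ.conv μ U := by
  rw [conv_apply_left ρ μ hU, mul_comm]
  calc μ ((fun x => a + x) ⁻¹' U) * ρ {a}
      = ∫⁻ _ in {a}, μ ((fun x => a + x) ⁻¹' U) ∂ρ := (setLIntegral_const _ _).symm
    _ = ∫⁻ x, ({a} : Set ℝ).indicator (fun _ => μ ((fun y => a + y) ⁻¹' U)) x ∂ρ :=
        (lintegral_indicator (measurableSet_singleton a) _).symm
    _ ≤ ∫⁻ x, μ ((fun y => x + y) ⁻¹' U) ∂ρ := by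
        refine lintegral_mono (Set.indicator_le fun b hb => ?_)
        rw [mem_singleton_iff] at hb
        subst hb; exact le_rfl

lemma lemB (μ : Measure ℝ) [IsFiniteMeasure μ] {c : ℝ≥0∞} {s : ℝ} (hs : c ≤ μ {s}) :
    ∀ n : ℕ, c ^ n ≤ convPow μ n {(n : ℝ) * s} := by
  intro n
  induction n with
  | zero =>
    show c ^ 0 ≤ Measure.dirac 0 {((0 : ℕ) : ℝ) * s}
    simp [Measure.dirac_apply_of_mem (show (0:ℝ) ∈ ({(0:ℝ)*s} : Set ℝ) by simp)]
  | succ n ih =>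
    show c ^ (n + 1) ≤ (convPow μ n).conv μ {((n + 1 : ℕ) : ℝ) * s}
    refine le_trans ?_ (conv_lb (convPow μ n) μ
      (measurableSet_singleton (((n + 1 : ℕ) : ℝ) * s)) ((n : ℝ) * s))
    rw [pow_succ]
    refine mul_le_mul' ih (hs.trans (measure_mono ?_))
    intro x hx
    rw [mem_singleton_iff] at hx
    subst hx
    simp only [mem_preimage, mem_singleton_iff]
    push_cast
    ring

theorem stmt14 (μ : Measure ℝ) [IsFiniteMeasure μ]
    (hsym : μ.map (fun x : ℝ => -x) = μ)
    (t : ℝ) (ht : 0 < t) (hatom : 0 < μ {t})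
    (δ : Measure ℝ) [IsFiniteMeasure δ]
    (hatoms : ∀ x : ℝ, 0 < δ {x} ↔ ∃ n : ℤ, x = n * t)
    (hconc : δ ({x : ℝ | ∃ n : ℤ, x = n * t}ᶜ) = 0) :
    ∀ U : Set ℝ, MeasurableSet U →
      (∀ k : ℕ, 1 ≤ k → convPow μ k U = 0) → (μ.conv δ) U = 0 := by
  intro U hU hzero
  -- symmetry: μ {-t} = μ {t}
  have hneg : μ {-t} = μ {t} := by
    conv_lhs => rw [← hsym]
    rw [Measure.map_apply measurable_neg (measurableSet_singleton _)]
    congr 1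
    ext x
    simp
  -- key: translates of μ by elements of ℤt vanish on U
  have lemA : ∀ n : ℤ, μ ((fun x => x + (n : ℝ) * t) ⁻¹' U) = 0 := by
    intro n
    set m := n.natAbs with hm
    set s : ℝ := if 0 ≤ n then t else -t with hsdef
    have hst : μ {s} = μ {t} := by
      by_cases h : 0 ≤ n
      · simp [hsdef, h]
      · simp [hsdef, h, hneg]
    have hms : (m : ℝ) * s = (n : ℝ) * t := by
      rcases le_or_gt 0 n with h | h
      · have h1 : ((n.natAbs : ℝ)) = (n : ℝ) := by
          rw [Nat.cast_natAbs]; exact_mod_cast abs_of_nonneg h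
        simp only [hsdef, if_pos h, hm]
        rw [h1]
      · have h1 : ((n.natAbs : ℝ)) = -(n : ℝ) := by
          rw [Nat.cast_natAbs]; exact_mod_cast abs_of_neg h
        simp only [hsdef, if_neg (not_le.mpr h), hm]
        rw [h1]
        ring
    have hB : μ {t} ^ m ≤ convPow μ m {(m : ℝ) * s} := lemB μ (le_of_eq hst.symm) m
    have hlb := conv_lb (convPow μ m) μ hU ((m : ℝ) * s)
    have h0 : (convPow μ m).conv μ U = 0 := hzero (m + 1) (by omega)
    rw [h0] at hlb
    have hprod : convPow μ m {(m : ℝ) * s} * μ ((fun x => (m : ℝ) * s + x) ⁻¹' U) = 0 :=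
      le_antisymm hlb zero_le
    have hpos : convPow μ m {(m : ℝ) * s} ≠ 0 :=
      fun h => (pow_ne_zero m hatom.ne').elim (le_antisymm (h ▸ hB) zero_le)
    have hμ0 : μ ((fun x => (m : ℝ) * s + x) ⁻¹' U) = 0 := by
      rcases mul_eq_zero.mp hprod with h | h
      · exact absurd h hpos
      · exact h
    rw [← hμ0]
    congr 1
    ext x
    simp [hms, add_comm]
  -- now compute μ.conv δ
  rw [conv_apply_right μ δ hU]
  have hf : Measurable fun y => μ ((fun x => x + y) ⁻¹' U) :=
    measurable_measure_prodMk_right (μ := μ) (measurable_add hU)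
  rw [lintegral_eq_zero_iff hf]
  rw [Filter.EventuallyEq, ae_iff]
  refine measure_mono_null ?_ hconc
  intro y hy
  simp only [mem_setOf_eq, mem_compl_iff]
  intro ⟨n, hn⟩
  apply hy
  simp only [Pi.zero_apply]
  rw [hn]
  exact lemA n
end
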